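/- Assume p = 2 and let k be a nonnegative integer. Let a3 ∈ R_P with v_P(a3) ≥ 3k. (i) If l1, l2 ∈ R_P satisfy v_P((l1⁴ + a3·l1) − (l2⁴ + a3·l2)) ≥ 4k, then v_P(l1 − l2) ≥ k. (ii) If m1, m2 ∈ R_P satisfy v_P((m1² + a3·m1) − (m2² + a3·m2)) ≥ 6k, then v_P(m1 − m2) ≥ 3k. -/

import Mathlib

/-!
Writing `d = x₁ - x₂`, additivity of Frobenius in characteristic `2` turns both hypotheses into
`v(dᵐ + a₃ d) ≥ m c` with `m = 4, c = k` resp. `m = 2, c = 3k`, and in both cases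
`v(a₃) ≥ (m - 1) c`. If `v(d) = n < c`, then `v(a₃ d) ≥ (m - 1) c + n > m n = v(dᵐ)`, so the
ultrametric inequality is an equality, `v(dᵐ + a₃ d) = m n < m c`, a contradiction.
-/

open IsDiscreteValuationRing

section

variable {R : Type*} [CommRing R] [IsDomain R] [IsDiscreteValuationRing R] {π : R}

lemma Irreducible.pow_dvd_iff_le_addVal (hπ : Irreducible π) {n : ℕ} {x : R} :
    π ^ n ∣ x ↔ (n : ℕ∞) ≤ addVal R x := by
  rw [← addVal_le_iff_dvd, hπ.addVal_pow]

theorem Irreducible.pow_dvd_of_pow_dvd_pow_add_mul (hπ : Irreducible π) {m c : ℕ} (hm : 2 ≤ m)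
    {a d : R} (ha : π ^ ((m - 1) * c) ∣ a) (h : π ^ (m * c) ∣ d ^ m + a * d) : π ^ c ∣ d := by
  rw [hπ.pow_dvd_iff_le_addVal] at ha h ⊢
  by_contra! hlt
  lift addVal R d to ℕ using hlt.ne_top with n hn
  have hnc : n < c := by exact_mod_cast hlt
  have hval_pow : addVal R (d ^ m) = (m * n : ℕ) := by
    rw [IsDiscreteValuationRing.addVal_pow, ← hn, nsmul_eq_mul, Nat.cast_mul]
  have hval_mul : ((m * n : ℕ) : ℕ∞) < addVal R (a * d) := by
    have hmn : m * n < (m - 1) * c + n := by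
      have := Nat.mul_lt_mul_of_pos_left hnc (show 0 < m - 1 by omega)
      calc m * n = (m - 1) * n + n := by rw [Nat.sub_one_mul, Nat.sub_add_cancel (by nlinarith)]
        _ < (m - 1) * c + n := by omega
    calc ((m * n : ℕ) : ℕ∞) < ((m - 1) * c + n : ℕ) := by exact_mod_cast hmn
      _ ≤ addVal R a + addVal R d := by rw [Nat.cast_add, hn]; gcongr
      _ = addVal R (a * d) := addVal_mul.symm
  have hval_sum : addVal R (d ^ m + a * d) = (m * n : ℕ) := by
    rw [AddValuation.map_add_eq_of_lt_left _ (hval_pow ▸ hval_mul), hval_pow]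
  rw [hval_sum, Nat.cast_le] at h
  exact absurd (Nat.le_of_mul_le_mul_left h (by omega)) (not_le.mpr hnc)

end

lemma sub_pow_expChar_pow_add_mul {R : Type*} [CommRing R] {p : ℕ} [ExpChar R p] (n : ℕ)
    (a x y : R) :
    (x - y) ^ p ^ n + a * (x - y) = (x ^ p ^ n + a * x) - (y ^ p ^ n + a * y) := by
  rw [sub_pow_expChar_pow]; ring

/-- Assume `p = 2` and let `k ≥ 0`. Let `a₃ ∈ R_P` with `v_P(a₃) ≥ 3k`.
(i) If `l₁, l₂ ∈ R_P` satisfy `v_P((l₁⁴ + a₃l₁) − (l₂⁴ + a₃l₂)) ≥ 4k`, then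
`v_P(l₁ − l₂) ≥ k`. (ii) If `m₁, m₂ ∈ R_P` satisfy
`v_P((m₁² + a₃m₁) − (m₂² + a₃m₂)) ≥ 6k`, then `v_P(m₁ − m₂) ≥ 3k`. -/
theorem stmt_18 {R : Type*} [CommRing R] [IsDomain R] [IsDiscreteValuationRing R]
    [CharP R 2] (π : R) (hπ : Irreducible π) (k : ℕ)
    (a₃ : R) (ha : π ^ (3 * k) ∣ a₃) :
    (∀ l₁ l₂ : R, π ^ (4 * k) ∣ (l₁ ^ 4 + a₃ * l₁) - (l₂ ^ 4 + a₃ * l₂)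
      → π ^ k ∣ l₁ - l₂) ∧
    (∀ m₁ m₂ : R, π ^ (6 * k) ∣ (m₁ ^ 2 + a₃ * m₁) - (m₂ ^ 2 + a₃ * m₂)
      → π ^ (3 * k) ∣ m₁ - m₂) := by
  refine ⟨fun l₁ l₂ h => ?_, fun m₁ m₂ h => ?_⟩
  · refine hπ.pow_dvd_of_pow_dvd_pow_add_mul (m := 2 ^ 2) (by norm_num) ha ?_
    rw [sub_pow_expChar_pow_add_mul]
    simpa using h
  · refine hπ.pow_dvd_of_pow_dvd_pow_add_mul (m := 2 ^ 1) (by norm_num) (by simpa using ha) ?_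
    rw [sub_pow_expChar_pow_add_mul]
    simpa [← mul_assoc] using h
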